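/- Let d ≥ 1, n ≥ 3, let a ∈ ℚ^n with a_p = x ∈ {1,...,d}, a_q = d+1, and a_k = v ∈ {1,...,d} for some index k ∉ {p,q} (a captured piece). Then there exists M ∈ M_n(ℚ) with no zero row, M ≠ I, M ≠ 0, such that b = M·a satisfies b_p = d+1, b_q = x, b_k = d+1, and b_i = a_i for all i ∉ {p, q, k}. -/
import Mathlib


/-- Transition matrix for a move with capture: the piece x at p moves to the
empty cell q, and the piece v at k is captured (set to the empty value d+1);
all other coordinates are unchanged. The matrix is rational, not identity,
not zero, and has no zero row. -/
theorem stmt_9 (d n : ℕ) (hd : 1 ≤ d) (hn : 3 ≤ n) (a : Fin n → ℚ)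
    (p q k : Fin n) (hpq : p ≠ q) (hkp : k ≠ p) (hkq : k ≠ q)
    (x v : ℕ) (hx1 : 1 ≤ x) (hxd : x ≤ d) (hv1 : 1 ≤ v) (hvd : v ≤ d)
    (hp : a p = x) (hq : a q = (d : ℚ) + 1) (hk : a k = v) :
    ∃ M : Matrix (Fin n) (Fin n) ℚ,
      M ≠ 1 ∧ M ≠ 0 ∧ (∀ i, ∃ j, M i j ≠ 0) ∧
      M.mulVec a p = (d : ℚ) + 1 ∧ M.mulVec a q = x ∧
      M.mulVec a k = (d : ℚ) + 1 ∧
      ∀ i, i ≠ p → i ≠ q → i ≠ k → M.mulVec a i = a i := by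
  classical
  set M : Matrix (Fin n) (Fin n) ℚ := fun i j =>
    if i = p then (if j = q then 1 else 0)
    else if i = q then (if j = p then 1 else 0)
    else if i = k then (if j = q then 1 else 0)
    else (if j = i then 1 else 0) with hM
  have hrow : ∀ i, M.mulVec a i =
      if i = p then a q else if i = q then a p else if i = k then a q else a i := by
    intro i
    simp only [Matrix.mulVec, dotProduct, hM]
    by_cases h1 : i = p <;> by_cases h2 : i = q <;> by_cases h3 : i = k <;>
      simp [h1, h2, h3, Finset.sum_ite_eq, Finset.sum_ite_eq']
  refine ⟨M, ?_, ?_, ?_, ?_, ?_, ?_, ?_⟩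
  · intro h
    have : M p p = (1 : Matrix (Fin n) (Fin n) ℚ) p p := by rw [h]
    simp [hM, hpq, Matrix.one_apply] at this
  · intro h
    have : M p q = (0 : Matrix (Fin n) (Fin n) ℚ) p q := by rw [h]
    simp [hM] at this
  · intro i
    by_cases h1 : i = p
    · exact ⟨q, by simp [hM, h1]⟩
    · by_cases h2 : i = q
      · exact ⟨p, by simp [hM, h1, h2, hpq.symm]⟩
      · by_cases h3 : i = k
        · exact ⟨q, by simp [hM, h1, h2, h3, hkp, hkq]⟩
        · exact ⟨i, by simp [hM, h1, h2, h3]⟩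
  · rw [hrow]; simp [hq]
  · rw [hrow]; simp [hpq.symm, hp]
  · rw [hrow]; simp [hkp, hkq, hq]
  · intro i h1 h2 h3; rw [hrow]; simp [h1, h2, h3]
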